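/- Suppose for every k and some b_k ∈ [0, D_k): ⌈(D_k - b_k)/T_k⌉·(C_k+S_k) + b_k + Σ_{i≠k} max(⌈(G^i_k + D_i - b_k)/T_i⌉, 0)·C_i ≤ D_k, where G^i_k = min(D_k - C_i, Π_k - Π_i). Then, in any EL schedule satisfying the backbone bound (Corollary backbone) with the interference bounds B1 and B2, every job of every task τ_k finishes within D_k of its release (proved by strong induction over the global priority order of jobs). -/
import Mathlib

open Finset

/-- Theorem suff_sched_test_fixed (abstract form), with R̃_i instantiated as D_i.
Jobs are totally ordered by priority via a well-founded relation `lt`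
(`lt J' J` means J' has higher priority than J). The backbone hypothesis states
that if every higher-priority job meets its deadline-based response bound, then
the response time of a job of task `task J = k` is bounded by R̃_k(b_k). -/
theorem stmt_18 {n : ℕ} (C S D T P : Fin n → ℝ) (b : Fin n → ℝ)
    (hb : ∀ k, 0 ≤ b k ∧ b k < D k)
    (htest : ∀ k : Fin n,
      (⌈(D k - b k) / T k⌉ : ℝ) * (C k + S k) + b k +
          ∑ i ∈ univ.erase k,
            ((max ⌈(min (D k - C i) (P k - P i) + D i - b k) / T i⌉ 0 : ℤ) : ℝ) * C i
        ≤ D k)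
    (Job : Type) (lt : Job → Job → Prop) (hwf : WellFounded lt)
    (task : Job → Fin n) (release finish : Job → ℝ)
    (hbackbone : ∀ J : Job,
      (∀ J', lt J' J → finish J' ≤ release J' + D (task J')) →
      finish J ≤ release J +
        ((⌈(D (task J) - b (task J)) / T (task J)⌉ : ℝ) * (C (task J) + S (task J)) +
          b (task J) +
          ∑ i ∈ univ.erase (task J),
            ((max ⌈(min (D (task J) - C i) (P (task J) - P i) + D i - b (task J)) / T i⌉ 0 : ℤ) : ℝ)
              * C i)) :
    ∀ J : Job, finish J ≤ release J + D (task J) := by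
  intro J
  induction J using hwf.induction with
  | _ J ih =>
    exact le_trans (hbackbone J ih) (by linarith [htest (task J)])
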